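/- Let R be a henselian discrete valuation ring with residue characteristic ≠ 2, K its fraction field with valuation v, and a, b, c ∈ K×. Suppose (i) v(a) and v(b) are both even, (ii) none of a, b, ab is a square in K, and (iii) v(c) is odd. Then the equation (X₁² − aY₁²)(X₂² − bY₂²)(X₃² − abY₃²) = c has no solution in K. -/

import Mathlib

/-!
Write each factor as `x² − u·y²` with `u` a unit, after absorbing the even power of `π` into `y`.
Since `u` is not a square in `K`, Hensel's lemma shows that its residue is not a square either,
so the form `x² − ū·y²` is anisotropic over the residue field. Scaling `(x, y)` by a power of `π`
to a pair of integers, one of them a unit, the value `x₀² − u·y₀²` is then a unit: every nonzero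
value of the form has even valuation. Hence so does the product, while `v(c)` is odd.
-/

open IsLocalRing Polynomial

theorem HenselianLocalRing.isSquare_of_isSquare_residue {R : Type*} [CommRing R]
    [HenselianLocalRing R] (h2 : (2 : ResidueField R) ≠ 0) {u : R} (hu : IsUnit u)
    (h : IsSquare (residue R u)) : IsSquare u := by
  obtain ⟨t₀, ht₀⟩ := h
  obtain ⟨t, rfl⟩ := residue_surjective t₀
  have hroot : (X ^ 2 - C u).eval t ∈ maximalIdeal R := by
    rw [← residue_eq_zero_iff]
    simp [ht₀, sq]
  have hderiv : IsUnit ((X ^ 2 - C u).derivative.eval t) := by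
    have ht : residue R t ≠ 0 := fun h0 ↦
      (residue_ne_zero_iff_isUnit u).mpr hu (by rw [ht₀, h0, mul_zero])
    have hd : (X ^ 2 - C u).derivative.eval t = 2 * t := by simp; ring
    rw [hd, ← residue_ne_zero_iff_isUnit, map_mul, map_ofNat]
    exact mul_ne_zero h2 ht
  obtain ⟨s, hs, -⟩ :=
    HenselianLocalRing.is_henselian _ (monic_X_pow_sub_C u two_ne_zero) t hroot hderiv
  refine ⟨s, ?_⟩
  simpa [sub_eq_zero, sq, eq_comm] using hs

theorem IsLocalRing.isUnit_sq_sub_mul_sq {R : Type*} [CommRing R] [IsLocalRing R] {u x y : R}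
    (hu : ¬IsSquare (residue R u)) (hxy : IsUnit x ∨ IsUnit y) : IsUnit (x ^ 2 - u * y ^ 2) := by
  rw [← residue_ne_zero_iff_isUnit]
  intro h
  simp only [map_sub, map_mul, map_pow, sub_eq_zero] at h
  by_cases hy : residue R y = 0
  · rw [hy, zero_pow two_ne_zero, mul_zero, pow_eq_zero_iff two_ne_zero] at h
    simp only [← residue_ne_zero_iff_isUnit] at hxy
    tauto
  · exact hu ⟨residue R x / residue R y, by field_simp; rw [h]⟩

section

variable {R K : Type*} [CommRing R] [Field K] [Algebra R K] {π : R}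

local notation "ι" => algebraMap R K

variable (π) in
def HasEvenValuation (x : K) : Prop :=
  ∃ (w : Rˣ) (n : ℤ), x = ι w * ι π ^ (2 * n)

variable [IsFractionRing R K]

theorem algebraMap_zpow_eq_zpow_mul (hπ : Irreducible π) {k n : ℤ} (hkn : k ≤ n) :
    ι π ^ n = ι π ^ k * ι (π ^ (n - k).toNat) := by
  have hπ0 : ι π ≠ 0 := by simpa using hπ.ne_zero
  rw [map_pow, ← zpow_natCast, ← zpow_add₀ hπ0]
  congr 1
  omega

theorem eq_zpow_mul_algebraMap_of_le (hπ : Irreducible π) {x : K} {w : Rˣ} {n : ℤ}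
    (hx : x = ι w * ι π ^ n) {k : ℤ} (hkn : k ≤ n) :
    x = ι π ^ k * ι (w * π ^ (n - k).toNat) := by
  rw [hx, algebraMap_zpow_eq_zpow_mul hπ hkn, map_mul]
  ring

theorem eq_of_algebraMap_mul_zpow_eq (hπ : Irreducible π) {u v : Rˣ} {m n : ℤ}
    (h : ι u * ι π ^ m = ι v * ι π ^ n) : m = n := by
  wlog hmn : m ≤ n generalizing u v m n
  · exact (this h.symm (le_of_not_ge hmn)).symm
  have hπ0 : ι π ^ m ≠ 0 := zpow_ne_zero _ (by simpa using hπ.ne_zero)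
  rw [algebraMap_zpow_eq_zpow_mul hπ hmn, mul_comm (ι π ^ m), ← mul_assoc, ← map_mul] at h
  have hu : (u : R) = v * π ^ (n - m).toNat :=
    IsFractionRing.injective R K (mul_right_cancel₀ hπ0 h)
  have hd : IsUnit (π ^ (n - m).toNat) := isUnit_of_mul_isUnit_right (hu ▸ u.isUnit)
  by_contra hne
  exact hπ.not_isUnit ((isUnit_pow_iff (by omega)).mp hd)

theorem HasEvenValuation.mul (hπ : Irreducible π) {x y : K} (hx : HasEvenValuation π x)
    (hy : HasEvenValuation π y) : HasEvenValuation π (x * y) := by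
  obtain ⟨w, m, rfl⟩ := hx
  obtain ⟨w', n, rfl⟩ := hy
  refine ⟨w * w', m + n, ?_⟩
  rw [Units.val_mul, map_mul, mul_add, zpow_add₀ (by simpa using hπ.ne_zero)]
  ring

theorem not_hasEvenValuation_of_odd (hπ : Irreducible π) {u : Rˣ} {n : ℤ} (hn : Odd n) :
    ¬HasEvenValuation π (ι u * ι π ^ n) := by
  rintro ⟨w, m, h⟩
  obtain ⟨k, rfl⟩ := hn
  have := eq_of_algebraMap_mul_zpow_eq hπ h
  omega

variable [IsDomain R] [IsDiscreteValuationRing R]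

theorem exists_eq_algebraMap_mul_zpow (hπ : Irreducible π) {x : K} (hx : x ≠ 0) :
    ∃ (w : Rˣ) (n : ℤ), x = ι w * ι π ^ n := by
  obtain ⟨n, w, rfl⟩ := IsDiscreteValuationRing.exists_units_eq_smul_zpow_of_irreducible hπ hx
  exact ⟨w, n, by rw [Units.smul_def, Algebra.smul_def]⟩

theorem exists_eq_zpow_mul_primitive (hπ : Irreducible π) {x y : K} (hxy : x ≠ 0 ∨ y ≠ 0) :
    ∃ (k : ℤ) (x₀ y₀ : R), (IsUnit x₀ ∨ IsUnit y₀) ∧ x = ι π ^ k * ι x₀ ∧ y = ι π ^ k * ι y₀ := by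
  by_cases hx : x = 0
  · obtain ⟨w, n, hw⟩ := exists_eq_algebraMap_mul_zpow hπ (hxy.resolve_left (not_not.mpr hx))
    exact ⟨n, 0, w, Or.inr w.isUnit, by simp [hx], by rw [hw, mul_comm]⟩
  by_cases hy : y = 0
  · obtain ⟨w, n, hw⟩ := exists_eq_algebraMap_mul_zpow hπ hx
    exact ⟨n, w, 0, Or.inl w.isUnit, by rw [hw, mul_comm], by simp [hy]⟩
  obtain ⟨w, j, hw⟩ := exists_eq_algebraMap_mul_zpow hπ hx
  obtain ⟨w', l, hw'⟩ := exists_eq_algebraMap_mul_zpow hπ hy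
  refine ⟨min j l, _, _, ?_, eq_zpow_mul_algebraMap_of_le hπ hw (min_le_left j l),
    eq_zpow_mul_algebraMap_of_le hπ hw' (min_le_right j l)⟩
  rcases min_choice j l with h | h <;> simp [h]

theorem hasEvenValuation_sq_sub_unit_mul_sq [HenselianLocalRing R]
    (h2 : (2 : ResidueField R) ≠ 0) (hπ : Irreducible π) {u : Rˣ} (hu : ¬IsSquare (ι u))
    {x y : K} (hne : x ^ 2 - ι u * y ^ 2 ≠ 0) : HasEvenValuation π (x ^ 2 - ι u * y ^ 2) := by
  have hxy : x ≠ 0 ∨ y ≠ 0 := by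
    by_contra! h
    simp [h.1, h.2] at hne
  obtain ⟨k, x₀, y₀, hunit, rfl, rfl⟩ := exists_eq_zpow_mul_primitive hπ hxy
  have hres : ¬IsSquare (residue R u) := fun h ↦
    hu ((HenselianLocalRing.isSquare_of_isSquare_residue h2 u.isUnit h).map ι)
  obtain ⟨w, hw⟩ := isUnit_sq_sub_mul_sq hres hunit
  refine ⟨w, k, ?_⟩
  rw [hw, mul_comm 2 k, zpow_mul, zpow_two]
  simp only [map_sub, map_mul, map_pow]
  ring

theorem hasEvenValuation_sq_sub_mul_sq [HenselianLocalRing R]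
    (h2 : (2 : ResidueField R) ≠ 0) (hπ : Irreducible π) {α : K} {u : Rˣ} {n : ℤ}
    (hα : α = ι u * ι π ^ n) (hn : Even n) (hαsq : ¬IsSquare α) {x y : K}
    (hne : x ^ 2 - α * y ^ 2 ≠ 0) : HasEvenValuation π (x ^ 2 - α * y ^ 2) := by
  obtain ⟨m, rfl⟩ := hn
  have hπ0 : ι π ≠ 0 := by simpa using hπ.ne_zero
  have hα' : α = ι u * (ι π ^ m) ^ 2 := by rw [hα, zpow_add₀ hπ0, sq]
  have hu : ¬IsSquare (ι u) := fun ⟨s, hs⟩ ↦ hαsq ⟨s * ι π ^ m, by rw [hα', hs]; ring⟩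
  have hform : x ^ 2 - α * y ^ 2 = x ^ 2 - ι u * (ι π ^ m * y) ^ 2 := by rw [hα']; ring
  rw [hform] at hne ⊢
  exact hasEvenValuation_sq_sub_unit_mul_sq h2 hπ hu hne

end

/-- Let `R` be a henselian discrete valuation ring with residue characteristic ≠ 2, `K` its
fraction field with valuation `v`, and `a, b, c ∈ Kˣ`. Suppose (i) `v(a)` and `v(b)` are both
even, (ii) none of `a`, `b`, `ab` is a square in `K`, and (iii) `v(c)` is odd. Then the
equation `(X₁² − aY₁²)(X₂² − bY₂²)(X₃² − abY₃²) = c` has no solution in `K`.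
(Valuations are encoded via decompositions `unit · π ^ n` for a uniformizer `π`.) -/
theorem stmt_4 (R K : Type*) [CommRing R] [IsDomain R] [IsDiscreteValuationRing R]
    [HenselianLocalRing R] [Field K] [Algebra R K] [IsFractionRing R K]
    (h2 : (2 : IsLocalRing.ResidueField R) ≠ 0)
    (π : R) (hπ : Irreducible π)
    (a b c : K) (ua ub uc : Rˣ) (na nb nc : ℤ)
    (ha : a = algebraMap R K ua * algebraMap R K π ^ na)
    (hb : b = algebraMap R K ub * algebraMap R K π ^ nb)
    (hc : c = algebraMap R K uc * algebraMap R K π ^ nc)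
    (hna : Even na) (hnb : Even nb)
    (hasq : ¬ IsSquare a) (hbsq : ¬ IsSquare b) (habsq : ¬ IsSquare (a * b))
    (hnc : Odd nc) :
    ¬ ∃ X1 Y1 X2 Y2 X3 Y3 : K,
        (X1 ^ 2 - a * Y1 ^ 2) * (X2 ^ 2 - b * Y2 ^ 2) * (X3 ^ 2 - a * b * Y3 ^ 2) = c := by
  rintro ⟨X1, Y1, X2, Y2, X3, Y3, heq⟩
  have hπ0 : algebraMap R K π ≠ 0 := by simpa using hπ.ne_zero
  have hc0 : c ≠ 0 := hc ▸ mul_ne_zero (by simp) (zpow_ne_zero _ hπ0)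
  obtain ⟨h12, hf3⟩ := mul_ne_zero_iff.mp (heq ▸ hc0)
  obtain ⟨hf1, hf2⟩ := mul_ne_zero_iff.mp h12
  have hab : a * b = algebraMap R K ↑(ua * ub) * algebraMap R K π ^ (na + nb) := by
    rw [ha, hb, Units.val_mul, map_mul, zpow_add₀ hπ0]
    ring
  have ev1 := hasEvenValuation_sq_sub_mul_sq h2 hπ ha hna hasq hf1
  have ev2 := hasEvenValuation_sq_sub_mul_sq h2 hπ hb hnb hbsq hf2
  have ev3 := hasEvenValuation_sq_sub_mul_sq h2 hπ hab (hna.add hnb) habsq hf3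
  exact not_hasEvenValuation_of_odd hπ hnc (hc ▸ heq ▸ (ev1.mul hπ ev2).mul hπ ev3)
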